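/- arXiv:2005.05944 — 4 statements merged into one kernel-verified Lean document; each statement's English description precedes it below -/
import Mathlib

section
/- Assume: (A1, forward simulation) if s ≈ t and (s,ς) ⇀λ (s',ς') in the source then there is t' with (t,ς) ⇀λ (t',ς') in the target and s' ≈ t'; (A2, backward simulation) if s ≈ t and (t,ς) ⇀λ (t',ς') in the target then there is s' with (s,ς) ⇀λ (s',ς') in the source and s' ≈ t'; (A3, lock-step simulation of strong similarity) if strong((t₁,ς),(t₂,ς)) and (t₁,ς) →τ (t₁',ς) then there is t₂' with (t₂,ς) →τ (t₂',ς) and strong((t₁',ς),(t₂',ς)); (A4, weakening) if λ ∈ Out, strong((t₁,ς),(t₂,ς)) and (t₁,ς) →λ (t₁',ς') then there is t₂' with (t₂,ς) →λ (t₂',ς') and weak((t₁',ς'),(t₂',ς')); (A5, option simulation of weak similarity) if weak((t₁,ς),(t₂,ς)) and (t₁,ς) →τ (t₁',ς) then weak((t₁',ς),(t₂,ς)); (A6, strengthening) if λ ∈ In, weak((t₁,ς),(t₂,ς)), (t₁,ς) →λ (t₁',ς') and (t₂,ς) →λ (t₂',ς') then strong((t₁',ς'),(t₂',ς')); (A7,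 adequacy of the emulation invariant) if emulInv(s,α,i) and α(i) ∈ In then for every ς there is s' with (s,ς) ⇀^{α(i)} (s', upd(α(i),ς)) in the source; (A8, preservation of the emulation invariant) if emulInv(s,α,i) and (s,ς) ⇀^{α(i)} (s',ς') in the source then emulInv(s',α,i+1); strong is symmetric; weak is symmetric and transitive; and α is alternating: for every position j with j+1 < |α|, α(j) ∈ In implies α(j+1) ∉ In, and α(j) ∈ Out implies α(j+1) ∉ Out. Then TrICL is a step-wise alternating backward simulation: for every i < |α| with α(i) ∈ In ∪ Out, if TrICL(s,t,u,ς,α,i) holds and (u,ς) ⇀^{α(i)} (u',ς') in the target, then there exist s' and t' such that (s,ς) ⇀^{α(i)} (s',ς') in the source, (t,ς) ⇀^{α(i)} (t',ς') in the target, and TrICL(s',t',u',ς',α,i+1). -/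
/-!
On an input label the source moves first: adequacy (A7) gives a source step, forward simulation
(A1) transports it to `t`, and the weak similarity of `t` and `u` survives their silent prefixes
(A5) and is strengthened by the common input step (A6). On an output label the target `u` moves
first: strong similarity follows `u`'s silent prefix in lock-step (A3) and is weakened by the
output step (A4), and backward simulation (A2) supplies the source step. Alternation makes the
other clause of `TrICL` at position `i + 1` vacuous.
-/

/-- A shared-state labeled transition system over labels `L` and shared
information `V`: a silent step relation (leaving the shared information
unchanged) and, for each label, a labeled step relation. -/
structure SLTS (S L V : Type*) where
  /-- silent step `(s,ς) →τ (s',ς)`; the shared information is unchanged -/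
  tau : V → S → S → Prop
  /-- labeled step `(s,ς) →λ (s',ς')` -/
  step : L → S → V → S → V → Prop

/-- Compressed step `(s,ς) ⇀λ (s',ς')`: finitely many silent steps followed
by a single labeled step. -/
def SLTS.comp {S L V : Type*} (M : SLTS S L V)
    (lbl : L) (s : S) (ς : V) (s' : S) (ς' : V) : Prop :=
  ∃ s'', Relation.ReflTransGen (M.tau ς) s s'' ∧ M.step lbl s'' ς s' ς'

/-- A run producing a trace `α` from `(s,ς)`, ending in `(s',ς')`:
a sequence of compressed steps, one for each label of `α`. -/
inductive SLTS.Run {S L V : Type*} (M : SLTS S L V) :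
    S → V → List L → S → V → Prop
  | nil (s : S) (ς : V) : SLTS.Run M s ς [] s ς
  | cons {s s' s'' : S} {ς ς' ς'' : V} {lbl : L} {rest : List L} :
      M.comp lbl s ς s' ς' → SLTS.Run M s' ς' rest s'' ς'' →
      SLTS.Run M s ς (lbl :: rest) s'' ς''

/-- The TrICL relation, indexed by a trace `α` and a position `i`. -/
def TrICL {S T L V : Type*}
    (cross : S → T → Prop)
    (emulInv : S → List L → ℕ → Prop)
    (strong weak : T → V → T → V → Prop)
    (In Out : Set L)
    (s : S) (t u : T) (ς : V) (α : List L) (i : ℕ) : Prop :=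
  cross s t ∧ emulInv s α i ∧
  (∀ (h : i < α.length), α[i]'h ∈ Out → strong t ς u ς) ∧
  (∀ (h : i < α.length), α[i]'h ∈ In → weak t ς u ς)

namespace Relation.ReflTransGen

variable {α β : Type*} {r : α → α → Prop} {p : β → β → Prop}

theorem exists_of_simulation {R : α → β → Prop}
    (h : ∀ a a' b, R a b → r a a' → ∃ b', p b b' ∧ R a' b')
    {a a' : α} {b : β} (hab : R a b) (hr : ReflTransGen r a a') :
    ∃ b', ReflTransGen p b b' ∧ R a' b' := by
  induction hr with
  | refl => exact ⟨b, .refl, hab⟩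
  | tail _ hstep ih =>
    obtain ⟨b', hb, hR⟩ := ih
    obtain ⟨b'', hstep', hR'⟩ := h _ _ _ hR hstep
    exact ⟨b'', hb.tail hstep', hR'⟩

theorem of_invariant {P : α → Prop} (h : ∀ a a', P a → r a a' → P a')
    {a a' : α} (ha : P a) (hr : ReflTransGen r a a') : P a' := by
  induction hr with
  | refl => exact ha
  | tail _ hstep ih => exact h _ _ ih hstep

end Relation.ReflTransGen

section Similarity

variable {T L V : Type*} {tgt : SLTS T L V} {strong weak : T → V → T → V → Prop}

theorem strong_of_weak_of_comp {In : Set L}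
    (A5 : ∀ (t₁ t₂ : T) (ς : V) (t₁' : T),
      weak t₁ ς t₂ ς → tgt.tau ς t₁ t₁' → weak t₁' ς t₂ ς)
    (A6 : ∀ (lbl : L) (t₁ t₂ : T) (ς : V) (t₁' t₂' : T) (ς' : V),
      lbl ∈ In → weak t₁ ς t₂ ς → tgt.step lbl t₁ ς t₁' ς' →
      tgt.step lbl t₂ ς t₂' ς' → strong t₁' ς' t₂' ς')
    (hweakSymm : ∀ (t₁ : T) (ς₁ : V) (t₂ : T) (ς₂ : V),
      weak t₁ ς₁ t₂ ς₂ → weak t₂ ς₂ t₁ ς₁)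
    {lbl : L} {t u t' u' : T} {ς ς' : V} (hIn : lbl ∈ In) (hw : weak t ς u ς)
    (ht : tgt.comp lbl t ς t' ς') (hu : tgt.comp lbl u ς u' ς') :
    strong t' ς' u' ς' := by
  obtain ⟨t₀, ht₀, ht'⟩ := ht
  obtain ⟨u₀, hu₀, hu'⟩ := hu
  have hwt : weak t₀ ς u ς :=
    Relation.ReflTransGen.of_invariant (fun a a' ha => A5 a u ς a' ha) hw ht₀
  have hwu : weak u₀ ς t₀ ς :=
    Relation.ReflTransGen.of_invariant (fun a a' ha => A5 a t₀ ς a' ha)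
      (hweakSymm _ _ _ _ hwt) hu₀
  exact A6 _ _ _ _ _ _ _ hIn (hweakSymm _ _ _ _ hwu) ht' hu'

theorem exists_comp_weak_of_strong {Out : Set L}
    (A3 : ∀ (t₁ t₂ : T) (ς : V) (t₁' : T),
      strong t₁ ς t₂ ς → tgt.tau ς t₁ t₁' →
      ∃ t₂', tgt.tau ς t₂ t₂' ∧ strong t₁' ς t₂' ς)
    (A4 : ∀ (lbl : L) (t₁ t₂ : T) (ς : V) (t₁' : T) (ς' : V),
      lbl ∈ Out → strong t₁ ς t₂ ς → tgt.step lbl t₁ ς t₁' ς' →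
      ∃ t₂', tgt.step lbl t₂ ς t₂' ς' ∧ weak t₁' ς' t₂' ς')
    (hstrongSymm : ∀ (t₁ : T) (ς₁ : V) (t₂ : T) (ς₂ : V),
      strong t₁ ς₁ t₂ ς₂ → strong t₂ ς₂ t₁ ς₁)
    (hweakSymm : ∀ (t₁ : T) (ς₁ : V) (t₂ : T) (ς₂ : V),
      weak t₁ ς₁ t₂ ς₂ → weak t₂ ς₂ t₁ ς₁)
    {lbl : L} {t u u' : T} {ς ς' : V} (hOut : lbl ∈ Out) (hs : strong t ς u ς)
    (hu : tgt.comp lbl u ς u' ς') :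
    ∃ t', tgt.comp lbl t ς t' ς' ∧ weak t' ς' u' ς' := by
  obtain ⟨u₀, hu₀, hu'⟩ := hu
  obtain ⟨t₀, ht₀, hs₀⟩ :=
    Relation.ReflTransGen.exists_of_simulation (R := (strong · ς · ς))
      (fun a a' b => A3 a b ς a') (hstrongSymm _ _ _ _ hs) hu₀
  obtain ⟨t', ht', hw⟩ := A4 _ _ _ _ _ _ hOut hs₀ hu'
  exact ⟨t', ⟨t₀, ht₀, ht'⟩, hweakSymm _ _ _ _ hw⟩

end Similarity

section TrICL

variable {S T L V : Type*} {cross : S → T → Prop} {emulInv : S → List L → ℕ → Prop}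
  {strong weak : T → V → T → V → Prop} {In Out : Set L}
  {s : S} {t u : T} {ς : V} {α : List L} {i : ℕ}

theorem TrICL.of_not_mem_In (hcross : cross s t) (hinv : emulInv s α i)
    (hs : strong t ς u ς) (hIn : ∀ h : i < α.length, α[i]'h ∉ In) :
    TrICL cross emulInv strong weak In Out s t u ς α i :=
  ⟨hcross, hinv, fun _ _ => hs, fun h hmem => absurd hmem (hIn h)⟩

theorem TrICL.of_not_mem_Out (hcross : cross s t) (hinv : emulInv s α i)
    (hw : weak t ς u ς) (hOut : ∀ h : i < α.length, α[i]'h ∉ Out) :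
    TrICL cross emulInv strong weak In Out s t u ς α i :=
  ⟨hcross, hinv, fun h hmem => absurd hmem (hOut h), fun _ _ => hw⟩

end TrICL

theorem stmt_4_general
    {S T L V : Type*}
    (src : SLTS S L V) (tgt : SLTS T L V)
    (In Out : Set L)
    (upd : L → V → V)
    (hupdT : ∀ (lbl : L) (t : T) (ς : V) (t' : T) (ς' : V),
      tgt.step lbl t ς t' ς' → ς' = upd lbl ς)
    (cross : S → T → Prop)
    (strong weak : T → V → T → V → Prop)
    (emulInv : S → List L → ℕ → Prop)
    -- A1: forward simulation
    (A1 : ∀ (s : S) (t : T) (lbl : L) (ς : V) (s' : S) (ς' : V),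
      cross s t → src.comp lbl s ς s' ς' →
      ∃ t', tgt.comp lbl t ς t' ς' ∧ cross s' t')
    -- A2: backward simulation
    (A2 : ∀ (s : S) (t : T) (lbl : L) (ς : V) (t' : T) (ς' : V),
      cross s t → tgt.comp lbl t ς t' ς' →
      ∃ s', src.comp lbl s ς s' ς' ∧ cross s' t')
    -- A3: lock-step simulation of strong similarity
    (A3 : ∀ (t₁ t₂ : T) (ς : V) (t₁' : T),
      strong t₁ ς t₂ ς → tgt.tau ς t₁ t₁' →
      ∃ t₂', tgt.tau ς t₂ t₂' ∧ strong t₁' ς t₂' ς)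
    -- A4: weakening
    (A4 : ∀ (lbl : L) (t₁ t₂ : T) (ς : V) (t₁' : T) (ς' : V),
      lbl ∈ Out → strong t₁ ς t₂ ς → tgt.step lbl t₁ ς t₁' ς' →
      ∃ t₂', tgt.step lbl t₂ ς t₂' ς' ∧ weak t₁' ς' t₂' ς')
    -- A5: option simulation of weak similarity
    (A5 : ∀ (t₁ t₂ : T) (ς : V) (t₁' : T),
      weak t₁ ς t₂ ς → tgt.tau ς t₁ t₁' → weak t₁' ς t₂ ς)
    -- A6: strengthening
    (A6 : ∀ (lbl : L) (t₁ t₂ : T) (ς : V) (t₁' t₂' : T) (ς' : V),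
      lbl ∈ In → weak t₁ ς t₂ ς → tgt.step lbl t₁ ς t₁' ς' →
      tgt.step lbl t₂ ς t₂' ς' → strong t₁' ς' t₂' ς')
    -- A7: adequacy of the emulation invariant
    (A7 : ∀ (s : S) (α : List L) (i : ℕ) (hi : i < α.length),
      emulInv s α i → α[i]'hi ∈ In →
      ∀ ς : V, ∃ s', src.comp (α[i]'hi) s ς s' (upd (α[i]'hi) ς))
    -- A8: preservation of the emulation invariant
    (A8 : ∀ (s : S) (α : List L) (i : ℕ) (hi : i < α.length) (ς : V)
        (s' : S) (ς' : V),
      emulInv s α i → src.comp (α[i]'hi) s ς s' ς' → emulInv s' α (i + 1))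
    -- strong is symmetric
    (hstrongSymm : ∀ (t₁ : T) (ς₁ : V) (t₂ : T) (ς₂ : V),
      strong t₁ ς₁ t₂ ς₂ → strong t₂ ς₂ t₁ ς₁)
    -- weak is symmetric
    (hweakSymm : ∀ (t₁ : T) (ς₁ : V) (t₂ : T) (ς₂ : V),
      weak t₁ ς₁ t₂ ς₂ → weak t₂ ς₂ t₁ ς₁)
    (α : List L)
    -- α is alternating
    (halt : ∀ (j : ℕ) (h : j + 1 < α.length),
      (α[j]'(Nat.lt_of_succ_lt h) ∈ In → α[j + 1]'h ∉ In) ∧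
      (α[j]'(Nat.lt_of_succ_lt h) ∈ Out → α[j + 1]'h ∉ Out)) :
    ∀ (i : ℕ) (hi : i < α.length), α[i]'hi ∈ In ∪ Out →
      ∀ (s : S) (t u : T) (ς : V) (u' : T) (ς' : V),
        TrICL cross emulInv strong weak In Out s t u ς α i →
        tgt.comp (α[i]'hi) u ς u' ς' →
        ∃ (s' : S) (t' : T),
          src.comp (α[i]'hi) s ς s' ς' ∧
          tgt.comp (α[i]'hi) t ς t' ς' ∧
          TrICL cross emulInv strong weak In Out s' t' u' ς' α (i + 1) := by
  intro i hi hmem s t u ς u' ς' ⟨hcross, hinv, hstrong, hweak⟩ hu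
  rcases hmem with hIn | hOut
  · obtain ⟨s', hs⟩ := A7 s α i hi hinv hIn ς
    obtain rfl : ς' = upd (α[i]'hi) ς := by
      obtain ⟨_, _, hstep⟩ := hu
      exact hupdT _ _ _ _ _ hstep
    obtain ⟨t', ht, hcross'⟩ := A1 s t _ ς s' _ hcross hs
    exact ⟨s', t', hs, ht, .of_not_mem_In hcross' (A8 _ _ _ hi _ _ _ hinv hs)
      (strong_of_weak_of_comp A5 A6 hweakSymm hIn (hweak hi hIn) ht hu)
      fun h => (halt i h).1 hIn⟩
  · obtain ⟨t', ht, hw⟩ := exists_comp_weak_of_strong A3 A4 hstrongSymm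
      hweakSymm hOut (hstrong hi hOut) hu
    obtain ⟨s', hs, hcross'⟩ := A2 s t _ ς t' ς' hcross ht
    exact ⟨s', t', hs, ht, .of_not_mem_Out hcross' (A8 _ _ _ hi _ _ _ hinv hs) hw
      fun h => (halt i h).2 hOut⟩

/-- TrICL is a step-wise alternating backward simulation. -/
theorem stmt_4
    {S T L V : Type*}
    (src : SLTS S L V) (tgt : SLTS T L V)
    (In Out : Set L) (hdisj : Disjoint In Out)
    (upd : L → V → V)
    (hupdS : ∀ (lbl : L) (s : S) (ς : V) (s' : S) (ς' : V),
      src.step lbl s ς s' ς' → ς' = upd lbl ς)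
    (hupdT : ∀ (lbl : L) (t : T) (ς : V) (t' : T) (ς' : V),
      tgt.step lbl t ς t' ς' → ς' = upd lbl ς)
    (cross : S → T → Prop)
    (strong weak : T → V → T → V → Prop)
    (emulInv : S → List L → ℕ → Prop)
    -- A1: forward simulation
    (A1 : ∀ (s : S) (t : T) (lbl : L) (ς : V) (s' : S) (ς' : V),
      cross s t → src.comp lbl s ς s' ς' →
      ∃ t', tgt.comp lbl t ς t' ς' ∧ cross s' t')
    -- A2: backward simulation
    (A2 : ∀ (s : S) (t : T) (lbl : L) (ς : V) (t' : T) (ς' : V),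
      cross s t → tgt.comp lbl t ς t' ς' →
      ∃ s', src.comp lbl s ς s' ς' ∧ cross s' t')
    -- A3: lock-step simulation of strong similarity
    (A3 : ∀ (t₁ t₂ : T) (ς : V) (t₁' : T),
      strong t₁ ς t₂ ς → tgt.tau ς t₁ t₁' →
      ∃ t₂', tgt.tau ς t₂ t₂' ∧ strong t₁' ς t₂' ς)
    -- A4: weakening
    (A4 : ∀ (lbl : L) (t₁ t₂ : T) (ς : V) (t₁' : T) (ς' : V),
      lbl ∈ Out → strong t₁ ς t₂ ς → tgt.step lbl t₁ ς t₁' ς' →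
      ∃ t₂', tgt.step lbl t₂ ς t₂' ς' ∧ weak t₁' ς' t₂' ς')
    -- A5: option simulation of weak similarity
    (A5 : ∀ (t₁ t₂ : T) (ς : V) (t₁' : T),
      weak t₁ ς t₂ ς → tgt.tau ς t₁ t₁' → weak t₁' ς t₂ ς)
    -- A6: strengthening
    (A6 : ∀ (lbl : L) (t₁ t₂ : T) (ς : V) (t₁' t₂' : T) (ς' : V),
      lbl ∈ In → weak t₁ ς t₂ ς → tgt.step lbl t₁ ς t₁' ς' →
      tgt.step lbl t₂ ς t₂' ς' → strong t₁' ς' t₂' ς')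
    -- A7: adequacy of the emulation invariant
    (A7 : ∀ (s : S) (α : List L) (i : ℕ) (hi : i < α.length),
      emulInv s α i → α[i]'hi ∈ In →
      ∀ ς : V, ∃ s', src.comp (α[i]'hi) s ς s' (upd (α[i]'hi) ς))
    -- A8: preservation of the emulation invariant
    (A8 : ∀ (s : S) (α : List L) (i : ℕ) (hi : i < α.length) (ς : V)
        (s' : S) (ς' : V),
      emulInv s α i → src.comp (α[i]'hi) s ς s' ς' → emulInv s' α (i + 1))
    -- strong is symmetric
    (hstrongSymm : ∀ (t₁ : T) (ς₁ : V) (t₂ : T) (ς₂ : V),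
      strong t₁ ς₁ t₂ ς₂ → strong t₂ ς₂ t₁ ς₁)
    -- weak is symmetric
    (hweakSymm : ∀ (t₁ : T) (ς₁ : V) (t₂ : T) (ς₂ : V),
      weak t₁ ς₁ t₂ ς₂ → weak t₂ ς₂ t₁ ς₁)
    -- weak is transitive
    (hweakTrans : ∀ (t₁ : T) (ς₁ : V) (t₂ : T) (ς₂ : V) (t₃ : T) (ς₃ : V),
      weak t₁ ς₁ t₂ ς₂ → weak t₂ ς₂ t₃ ς₃ → weak t₁ ς₁ t₃ ς₃)
    (α : List L)
    -- α is alternating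
    (halt : ∀ (j : ℕ) (h : j + 1 < α.length),
      (α[j]'(Nat.lt_of_succ_lt h) ∈ In → α[j + 1]'h ∉ In) ∧
      (α[j]'(Nat.lt_of_succ_lt h) ∈ Out → α[j + 1]'h ∉ Out)) :
    ∀ (i : ℕ) (hi : i < α.length), α[i]'hi ∈ In ∪ Out →
      ∀ (s : S) (t u : T) (ς : V) (u' : T) (ς' : V),
        TrICL cross emulInv strong weak In Out s t u ς α i →
        tgt.comp (α[i]'hi) u ς u' ς' →
        ∃ (s' : S) (t' : T),
          src.comp (α[i]'hi) s ς s' ς' ∧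
          tgt.comp (α[i]'hi) t ς t' ς' ∧
          TrICL cross emulInv strong weak In Out s' t' u' ς' α (i + 1) :=
  stmt_4_general src tgt In Out upd hupdT cross strong weak emulInv A1 A2 A3 A4 A5 A6 A7 A8
    hstrongSymm hweakSymm α halt
end

section
/- Assume: strong and weak are symmetric; strong satisfies lock-step simulation for silent steps: if strong((t₁,ς),(t₂,ς)) and (t₁,ς) →τ (t₁',ς) then there is t₂' with (t₂,ς) →τ (t₂',ς) and strong((t₁',ς),(t₂',ς)); and weakening holds for labeled output steps: if λ ∈ Out, strong((t₁,ς),(t₂,ς)) and (t₁,ς) →λ (t₁',ς') then there is t₂' with (t₂,ς) →λ (t₂',ς') and weak((t₁',ς'),(t₂',ς')). Then weakening holds across compressed steps: if λ ∈ Out, strong((t₁,ς),(t₂,ς)) and (t₂,ς) ⇀λ (t₂',ς'), then there exists t₁' with (t₁,ς) ⇀λ (t₁',ς') and weak((t₁',ς'),(t₂',ς')). -/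
theorem Relation.ReflTransGen.exists_of_simulation_s6 {α β : Type*} {r : α → α → Prop}
    {p : β → β → Prop} {R : α → β → Prop}
    (hsim : ∀ a a' b, R a b → r a a' → ∃ b', p b b' ∧ R a' b')
    {a a' : α} (h : Relation.ReflTransGen r a a') {b : β} (hab : R a b) :
    ∃ b', Relation.ReflTransGen p b b' ∧ R a' b' := by
  induction h with
  | refl => exact ⟨b, .refl, hab⟩
  | tail _ hstep ih =>
    obtain ⟨b', hbb', hR⟩ := ih
    obtain ⟨b'', hb'b'', hR'⟩ := hsim _ _ _ hR hstep
    exact ⟨b'', hbb'.tail hb'b'', hR'⟩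

/-- Weakening of strong similarity to weak similarity across compressed
output steps. -/
theorem stmt_6
    {S L V : Type*}
    (M : SLTS S L V) (Out : Set L)
    (strong weak : S → V → S → V → Prop)
    -- strong is symmetric
    (hstrongSymm : ∀ (t₁ : S) (ς₁ : V) (t₂ : S) (ς₂ : V),
      strong t₁ ς₁ t₂ ς₂ → strong t₂ ς₂ t₁ ς₁)
    -- weak is symmetric
    (hweakSymm : ∀ (t₁ : S) (ς₁ : V) (t₂ : S) (ς₂ : V),
      weak t₁ ς₁ t₂ ς₂ → weak t₂ ς₂ t₁ ς₁)
    -- lock-step simulation of strong similarity for silent steps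
    (hlock : ∀ (t₁ t₂ : S) (ς : V) (t₁' : S),
      strong t₁ ς t₂ ς → M.tau ς t₁ t₁' →
      ∃ t₂', M.tau ς t₂ t₂' ∧ strong t₁' ς t₂' ς)
    -- weakening for labeled output steps
    (hweaken : ∀ (lbl : L) (t₁ t₂ : S) (ς : V) (t₁' : S) (ς' : V),
      lbl ∈ Out → strong t₁ ς t₂ ς → M.step lbl t₁ ς t₁' ς' →
      ∃ t₂', M.step lbl t₂ ς t₂' ς' ∧ weak t₁' ς' t₂' ς') :
    ∀ (lbl : L) (t₁ t₂ : S) (ς : V) (t₂' : S) (ς' : V),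
      lbl ∈ Out → strong t₁ ς t₂ ς → M.comp lbl t₂ ς t₂' ς' →
      ∃ t₁', M.comp lbl t₁ ς t₁' ς' ∧ weak t₁' ς' t₂' ς' := by
  intro lbl t₁ t₂ ς t₂' ς' hout hst ⟨t₂'', htau₂, hstep₂⟩
  obtain ⟨t₁'', htau₁, hst''⟩ :=
    htau₂.exists_of_simulation_s6 (R := fun a b => strong a ς b ς)
      (fun a a' b hab hτ => hlock a b ς a' hab hτ) (hstrongSymm _ _ _ _ hst)
  obtain ⟨t₁', hstep₁, hweak⟩ := hweaken lbl t₂'' t₁'' ς t₂' ς' hout hst'' hstep₂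
  exact ⟨t₁', ⟨t₁'', htau₁, hstep₁⟩, hweakSymm _ _ _ _ hweak⟩
end

section
/- Let a compilation setting with trace semantics be given. Assume: (soundness of target trace equivalence) for all source partial programs p₁, p₂, if ↓p₁ and ↓p₂ are not contextually equivalent in the target language then they are not trace equivalent in the target language; (no trace is omitted or added by compilation) for every source partial program p and every trace α, α ∈ Trₛ(p) if and only if α ∈ Trₜ(↓p); and (completeness of source trace equivalence) for all p₁, p₂, if p₁ and p₂ are not trace equivalent in the source language then they are not contextually equivalent in the source language. Then the compiler preserves contextual equivalence: for all source partial programs p₁, p₂, if p₁ ≃ctx p₂ in the source language then ↓p₁ ≃ctx ↓p₂ in the target language. -/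
theorem stmt_10
    {PS PT CS CT WS WT L : Type*}
    (plugS : CS → PS → WS) (plugT : CT → PT → WT)
    (convS : WS → Prop) (convT : WT → Prop)
    (compile : PS → PT)
    (TrS : PS → Set (List L)) (TrT : PT → Set (List L))
    -- soundness of target trace equivalence
    (hsound : ∀ p₁ p₂ : PS,
      ¬ (∀ C : CT, convT (plugT C (compile p₁)) ↔ convT (plugT C (compile p₂))) →
      TrT (compile p₁) ≠ TrT (compile p₂))
    -- no trace is omitted or added by compilation
    (htr : ∀ (p : PS) (α : List L), α ∈ TrS p ↔ α ∈ TrT (compile p))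
    -- completeness of source trace equivalence
    (hcompl : ∀ p₁ p₂ : PS,
      TrS p₁ ≠ TrS p₂ →
      ¬ (∀ C : CS, convS (plugS C p₁) ↔ convS (plugS C p₂))) :
    ∀ p₁ p₂ : PS,
      (∀ C : CS, convS (plugS C p₁) ↔ convS (plugS C p₂)) →
      (∀ C : CT, convT (plugT C (compile p₁)) ↔ convT (plugT C (compile p₂))) := by
  intro p₁ p₂ hctx
  have hTrS : TrS p₁ = TrS p₂ := by
    by_contra hne
    exact hcompl p₁ p₂ hne hctx
  have hTrT : TrT (compile p₁) = TrT (compile p₂) := by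
    ext α
    rw [← htr, ← htr, hTrS]
  by_contra hne
  exact hsound p₁ p₂ hne hTrT
end

section
/- Let a compilation setting with trace semantics be given, together with a compiler ↓c mapping source contexts to target contexts. Assume: (whole-program correctness) for every source context C and source partial program p, C[p]⇓ in the source language iff (↓c C)[↓p]⇓ in the target language; (soundness of target trace equivalence) for all p₁, p₂, if ↓p₁ and ↓p₂ are not contextually equivalent in the target language then they are not trace equivalent in the target language; (no trace is omitted or added by compilation) for every p and every trace α, α ∈ Trₛ(p) iff α ∈ Trₜ(↓p); and (completeness of source trace equivalence) for all p₁, p₂, if p₁ and p₂ are not trace equivalent in the source language then they are not contextually equivalent in the source language. Then the compiler is fully abstract: for all source partial programs p₁, p₂, p₁ ≃ctx p₂ in the source language if and only if ↓p₁ ≃ctx ↓p₂ in the target language. -/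
/-! Contextual equivalence is reflected by any compiler that is correct on whole programs, since
every source context can be compiled. It is preserved because trace equivalence sits between the
two contextual equivalences: source-equivalent programs have equal source traces (completeness),
hence equal target traces (compilation neither adds nor omits traces), hence are
target-equivalent (soundness). -/

namespace Compilation

def CtxEquiv {P C W : Type*} (plug : C → P → W) (conv : W → Prop) (p₁ p₂ : P) : Prop :=
  ∀ c : C, conv (plug c p₁) ↔ conv (plug c p₂)

theorem ctxEquiv_of_ctxEquiv_compile {PS PT CS CT WS WT : Type*}
    {plugS : CS → PS → WS} {plugT : CT → PT → WT} {convS : WS → Prop} {convT : WT → Prop}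
    {compile : PS → PT} {compileC : CS → CT}
    (hcorrect : ∀ (C : CS) (p : PS),
      convS (plugS C p) ↔ convT (plugT (compileC C) (compile p)))
    {p₁ p₂ : PS} (h : CtxEquiv plugT convT (compile p₁) (compile p₂)) :
    CtxEquiv plugS convS p₁ p₂ := fun C =>
  (hcorrect C p₁).trans <| (h (compileC C)).trans (hcorrect C p₂).symm

theorem rel_compile_of_rel_of_traces {PS PT L : Type*} {RS : PS → PS → Prop}
    {RT : PT → PT → Prop} {compile : PS → PT} {TrS : PS → Set (List L)} {TrT : PT → Set (List L)}
    (hsound : ∀ p₁ p₂ : PS, ¬ RT (compile p₁) (compile p₂) → TrT (compile p₁) ≠ TrT (compile p₂))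
    (htr : ∀ p : PS, TrS p = TrT (compile p))
    (hcompl : ∀ p₁ p₂ : PS, TrS p₁ ≠ TrS p₂ → ¬ RS p₁ p₂)
    {p₁ p₂ : PS} (h : RS p₁ p₂) : RT (compile p₁) (compile p₂) := by
  by_contra hT
  refine hcompl p₁ p₂ ?_ h
  rw [htr, htr]
  exact hsound p₁ p₂ hT

end Compilation

open Compilation

/-- Full abstraction of the compiler from whole-program correctness,
soundness of target trace equivalence, trace preservation/reflection of
compilation, and completeness of source trace equivalence. -/
theorem stmt_12
    {PS PT CS CT WS WT L : Type*}
    (plugS : CS → PS → WS) (plugT : CT → PT → WT)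
    (convS : WS → Prop) (convT : WT → Prop)
    (compile : PS → PT) (compileC : CS → CT)
    (TrS : PS → Set (List L)) (TrT : PT → Set (List L))
    -- whole-program correctness
    (hcorrect : ∀ (C : CS) (p : PS),
      convS (plugS C p) ↔ convT (plugT (compileC C) (compile p)))
    -- soundness of target trace equivalence
    (hsound : ∀ p₁ p₂ : PS,
      ¬ (∀ C : CT, convT (plugT C (compile p₁)) ↔ convT (plugT C (compile p₂))) →
      TrT (compile p₁) ≠ TrT (compile p₂))
    -- no trace is omitted or added by compilation
    (htr : ∀ (p : PS) (α : List L), α ∈ TrS p ↔ α ∈ TrT (compile p))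
    -- completeness of source trace equivalence
    (hcompl : ∀ p₁ p₂ : PS,
      TrS p₁ ≠ TrS p₂ →
      ¬ (∀ C : CS, convS (plugS C p₁) ↔ convS (plugS C p₂))) :
    ∀ p₁ p₂ : PS,
      (∀ C : CS, convS (plugS C p₁) ↔ convS (plugS C p₂)) ↔
      (∀ C : CT, convT (plugT C (compile p₁)) ↔ convT (plugT C (compile p₂))) := fun _ _ =>
  ⟨rel_compile_of_rel_of_traces (RS := CtxEquiv plugS convS) (RT := CtxEquiv plugT convT)
      hsound (fun p => Set.ext (htr p)) hcompl,
    ctxEquiv_of_ctxEquiv_compile hcorrect⟩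
end
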